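/- Let E₀ = E₀(h) be any family of real numbers with |E₀(h) − (1+h)| ≤ e^{−1/(10h)}. Then there exist C > 0 and h₀ > 0 such that for every h ∈ (0,h₀) there is R̃ = R̃(h) ∈ [R, R+1] with |R̃(h) − R| ≤ C h and min_{j∈ℤ} |Φ(R̃(h)) + (j + 1/4)π h| ≥ π h/4. -/

import Mathlib

/-! Beyond the support of `V` the phase is affine with slope `√E₀`, so moving the radius by
less than `πh/√E₀` shifts `Φ` through a whole period `πh` of the quantization condition.
Hence one can place `Φ(R̃)` exactly on `(k + 1/4)πh`, halfway between two of the forbidden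
values `-(j + 1/4)πh`. The bound `E₀ ≥ 1/4`, which keeps the shift `O(h)`, comes from
`e^{-1/(10h)} ≤ 10h`. -/

open MeasureTheory Set Real

noncomputable section

/-- The phase `Φ(x) = ∫_{4-E₀}^x √(E₀ - V(y)) dy`. -/
def wkbPhase (V : ℝ → ℝ) (E₀ : ℝ) (x : ℝ) : ℝ :=
  ∫ y in (4 - E₀)..x, Real.sqrt (E₀ - V y)

theorem wkbPhase_add_of_eqOn_zero {V : ℝ → ℝ} (hV : Continuous V) {E R t : ℝ}
    (hzero : EqOn V 0 (uIcc R (R + t))) :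
    wkbPhase V E (R + t) = wkbPhase V E R + √E * t := by
  have hint (a b : ℝ) : IntervalIntegrable (fun y => √(E - V y)) volume a b :=
    (continuous_const.sub hV).sqrt.intervalIntegrable a b
  have hconst : EqOn (fun y => √(E - V y)) (fun _ => √E) (uIcc R (R + t)) := fun y hy => by
    simp [hzero hy]
  rw [wkbPhase, wkbPhase, ← intervalIntegral.integral_add_adjacent_intervals (hint _ R) (hint R _),
    intervalIntegral.integral_congr hconst, intervalIntegral.integral_const]
  simp [mul_comm]

theorem half_le_abs_intCast_add_half (m : ℤ) : (1 / 2 : ℝ) ≤ |(m : ℝ) + 1 / 2| := by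
  rcases le_or_gt 0 m with hm | hm
  · have : (0 : ℝ) ≤ m := by exact_mod_cast hm
    rw [abs_of_nonneg (by linarith)]
    linarith
  · have : (m : ℝ) ≤ -1 := by exact_mod_cast Int.le_sub_one_of_lt hm
    rw [abs_of_nonpos (by linarith)]
    linarith

theorem exists_mem_Ico_half_le_abs_add_intCast_add_quarter_mul (a : ℝ) {c : ℝ} (hc : 0 < c) :
    ∃ u ∈ Ico 0 c, ∀ j : ℤ, c / 2 ≤ |a + u + ((j : ℝ) + 1 / 4) * c| := by
  set n := toIcoDiv hc 0 (c / 4 - a)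
  refine ⟨toIcoMod hc 0 (c / 4 - a), toIcoMod_mem_Ico' hc _, fun j => ?_⟩
  have hsum : a + toIcoMod hc 0 (c / 4 - a) + ((j : ℝ) + 1 / 4) * c
      = (((j - n : ℤ) : ℝ) + 1 / 2) * c := by
    rw [← self_sub_toIcoDiv_zsmul, zsmul_eq_mul]
    push_cast
    ring
  rw [hsum, abs_mul, abs_of_pos hc]
  nlinarith [half_le_abs_intCast_add_half (j - n)]

theorem exp_neg_one_div_le {x : ℝ} (hx : 0 < x) : exp (-1 / x) ≤ x := by
  have hexp : 1 / x ≤ exp (1 / x) := by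
    linarith [add_one_le_exp (1 / x)]
  rw [neg_div, exp_neg, inv_le_comm₀ (exp_pos _) hx, inv_eq_one_div]
  exact hexp

theorem choice_of_radius_avoiding_quantization_general
    (V : ℝ → ℝ)
    (hV_smooth : ContDiff ℝ (⊤ : ℕ∞) V)
    (hV_supp : tsupport V ⊆ Set.Icc (-5 : ℝ) 5)
    (R : ℝ) (hR : 5 < R)
    (E₀ : ℝ → ℝ)
    (hE₀ : ∀ h : ℝ, 0 < h → |E₀ h - (1 + h)| ≤ Real.exp (-1 / (10 * h))) :
    ∃ C > (0 : ℝ), ∃ h₀ > (0 : ℝ), ∀ h : ℝ, 0 < h → h < h₀ →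
      ∃ R' ∈ Set.Icc R (R + 1),
        |R' - R| ≤ C * h ∧
        ∀ j : ℤ, Real.pi * h / 4 ≤ |wkbPhase V (E₀ h) R' + ((j : ℝ) + 1 / 4) * Real.pi * h| := by
  refine ⟨2 * π, by positivity, 1 / 12, by norm_num, fun h hh hlt => ?_⟩
  have hπh : 0 < π * h := by positivity
  have hE : 1 / 4 ≤ E₀ h := by
    have := (abs_le.mp ((hE₀ h hh).trans (exp_neg_one_div_le (by positivity)))).1
    linarith
  have hsqrt : 1 / 2 ≤ √(E₀ h) := (le_sqrt' (by norm_num)).mpr (by linarith)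
  obtain ⟨u, ⟨hu0, huπh⟩, hfar⟩ :=
    exists_mem_Ico_half_le_abs_add_intCast_add_quarter_mul (wkbPhase V (E₀ h) R) hπh
  set t := u / √(E₀ h)
  have ht0 : 0 ≤ t := by positivity
  have ht : t ≤ 2 * u := by
    rw [div_le_iff₀ (by positivity)]
    nlinarith
  have hzero : EqOn V 0 (uIcc R (R + t)) := fun y hy =>
    image_eq_zero_of_notMem_tsupport fun hmem => by
      have := (hV_supp hmem).2
      have := (uIcc_of_le (le_add_of_nonneg_right ht0) ▸ hy).1
      linarith
  have hphase : wkbPhase V (E₀ h) (R + t) = wkbPhase V (E₀ h) R + u := by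
    rw [wkbPhase_add_of_eqOn_zero hV_smooth.continuous hzero, mul_div_cancel₀ _ (by positivity)]
  refine ⟨R + t, ⟨by linarith, by nlinarith [pi_lt_four]⟩, by
    rw [add_sub_cancel_left, abs_of_nonneg ht0]; nlinarith, fun j => ?_⟩
  rw [hphase, mul_assoc _ π h]
  linarith [hfar j]

/-- Given any family `E₀(h) = 1 + h + O(e^{-1/(10h)})`, one can choose
`R̃(h) ∈ [R, R+1]` with `R̃(h) = R + O(h)` avoiding the quantization condition:
`min_{j ∈ ℤ} |Φ(R̃(h)) + (j + 1/4)πh| ≥ πh/4`. -/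
theorem choice_of_radius_avoiding_quantization
    (V : ℝ → ℝ)
    (hV_smooth : ContDiff ℝ (⊤ : ℕ∞) V) (hV_comp : HasCompactSupport V)
    (hV_nonneg : ∀ x, 0 ≤ V x) (hV_even : ∀ x, V (-x) = V x)
    (hV_inner : ∀ x ∈ Set.Icc (-1 : ℝ) 1, V x = x ^ 2 + 1)
    (hV_slope : ∀ x ∈ Set.Icc (2 : ℝ) 3.5, V x = 4 - x)
    (hV_lt : ∀ x : ℝ, 3 < x → V x < 1)
    (hV_supp : tsupport V ⊆ Set.Icc (-5 : ℝ) 5)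
    (R : ℝ) (hR : 5 < R)
    (E₀ : ℝ → ℝ)
    (hE₀ : ∀ h : ℝ, 0 < h → |E₀ h - (1 + h)| ≤ Real.exp (-1 / (10 * h))) :
    ∃ C > (0 : ℝ), ∃ h₀ > (0 : ℝ), ∀ h : ℝ, 0 < h → h < h₀ →
      ∃ R' ∈ Set.Icc R (R + 1),
        |R' - R| ≤ C * h ∧
        ∀ j : ℤ, Real.pi * h / 4 ≤ |wkbPhase V (E₀ h) R' + ((j : ℝ) + 1 / 4) * Real.pi * h| :=
  choice_of_radius_avoiding_quantization_general V hV_smooth hV_supp R hR E₀ hE₀
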